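/- Let γ < ω₁ and let {f_τ : τ ∈ I} be a countable indexed family of automorphisms of T↾(γ+1). Let A ⊆ B ⊆ I be finite. Let b_0,…,b_{n-1} be distinct elements of T_γ, and let c_0,…,c_{n-1}, d_0,…,d_{n-1} be distinct elements of T_{γ+1} such that b_k <_T c_k and b_k <_T d_k for all k < n. Set C = {c_k : k < n} and D = {d_k : k < n}. Let Y ⊆ T_{γ+1} be finite with (C ∪ D) ∩ Y = ∅. Then there exists an indexed family {g_τ : τ ∈ I} of automorphisms of T↾(γ+2) such that: (1) f_τ ⊆ g_τ for all τ ∈ I; (2) for all τ ∈ A, (b_0,…,b_{n-1}) and (c_0,…,c_{n-1}) are g_τ-consistent and (b_0,…,b_{n-1}) and (d_0,…,d_{n-1}) are g_τ-consistent; (3) for all x ∈ C: if τ ∈ A then g_τ(x) and g_τ^{-1}(x) are not in Y ∪ D, and if τ ∈ B \ A then g_τ(x) and g_τ^{-1}(x) are not in C ∪ D ∪ Y; (4) for all x ∈ D: if τ ∈ A then g_τ(x) and g_τ^{-1}(x) are not in Y ∪ C, and if τ ∈ B \ A then g_τ(x) and g_τ^{-1}(x) are not in C ∪ D ∪ Y;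 (5) for all x ∈ Y and τ ∈ B, g_τ(x) and g_τ^{-1}(x) are not in C ∪ D ∪ Y. -/

import Mathlib

noncomputable section

/-- The ordinal `ω₁`. -/
def omega1 : Ordinal := (Cardinal.aleph 1).ord

/-- A normal, infinitely splitting `ω₁`-tree structure on the partial order `α`.
`height x` is the height of `x` (the order type of its set of strict predecessors,
which is linearly ordered by `pred_linear`), and `restrict x β` is the unique node
of height `β` below `x` (for `β ≤ height x`). -/
structure OmegaOneTree (α : Type) [PartialOrder α] where
  height : α → Ordinal
  restrict : α → Ordinal → α
  height_lt_omega1 : ∀ x : α, height x < omega1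
  height_strictMono : ∀ {x y : α}, x < y → height x < height y
  pred_linear : ∀ {x y z : α}, y < x → z < x → y ≤ z ∨ z ≤ y
  restrict_le : ∀ (x : α) {β : Ordinal}, β ≤ height x → restrict x β ≤ x
  height_restrict : ∀ (x : α) {β : Ordinal}, β ≤ height x → height (restrict x β) = β
  restrict_eq : ∀ {x y : α} {β : Ordinal}, y ≤ x → height y = β → restrict x β = y
  level_nonempty : ∀ β : Ordinal, β < omega1 → ∃ x : α, height x = β
  level_countable : ∀ β : Ordinal, {x : α | height x = β}.Countable
  root_exists : ∃ r : α, height r = 0 ∧ ∀ x : α, r ≤ x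
  splitting : ∀ x : α, {y : α | x < y ∧ height y = height x + 1}.Infinite
  exists_above : ∀ (x : α) {β : Ordinal}, height x < β → β < omega1 →
    ∃ y : α, x < y ∧ height y = β
  limit_eq : ∀ {x y : α}, height x = height y → Order.IsSuccLimit (height x) →
    (∀ z : α, z < x ↔ z < y) → x = y

variable {α : Type} [PartialOrder α]

/-- The pair `(g, g')` is an automorphism of `T↾(β+1)` together with its inverse:
both are level preserving on `T↾(β+1)`, mutually inverse there, and strictly
increasing there (hence `g` is an order isomorphism of `T↾(β+1)` onto itself). -/
def IsTreeAuto (T : OmegaOneTree α) (β : Ordinal) (g g' : α → α) : Prop :=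
  (∀ x : α, T.height x ≤ β → T.height (g x) = T.height x) ∧
  (∀ x : α, T.height x ≤ β → T.height (g' x) = T.height x) ∧
  (∀ x : α, T.height x ≤ β → g' (g x) = x) ∧
  (∀ x : α, T.height x ≤ β → g (g' x) = x) ∧
  (∀ x y : α, T.height y ≤ β → x < y → g x < g y) ∧
  (∀ x y : α, T.height y ≤ β → x < y → g' x < g' y)

/-- `(g, g')` extends `(f, f')` on `T↾(γ+1)` (i.e. `f ⊆ g` for automorphisms). -/
def AutoExtends (T : OmegaOneTree α) (γ : Ordinal) (f f' g g' : α → α) : Prop :=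
  (∀ x : α, T.height x ≤ γ → g x = f x) ∧ (∀ x : α, T.height x ≤ γ → g' x = f' x)

/-- `X↾lo` and `X` are `g`-consistent: for all `x, y ∈ X`,
`g(x↾lo) = y↾lo` iff `g(x) = y`. -/
def AutoConsistentSet (T : OmegaOneTree α) (g : α → α) (lo : Ordinal) (X : Set α) : Prop :=
  ∀ x ∈ X, ∀ y ∈ X, (g (T.restrict x lo) = T.restrict y lo ↔ g x = y)

/-- The tuples `a` and `b` (with `a = b↾lo` componentwise) are `g`-consistent:
for all `i, j`, `g(a i) = a j` iff `g(b i) = b j`. -/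
def AutoConsistentPair (g : α → α) {n : ℕ} (a b : Fin n → α) : Prop :=
  ∀ i j : Fin n, (g (a i) = a j ↔ g (b i) = b j)

/-- The indexed family of automorphisms `(g, g')` is separated on the injective
tuple `a`: no member of the tuple satisfies a relation with itself, and each
member satisfies at most one relation `g_τ^m(a k) = a i` with earlier members. -/
def AutoSepTuple {ι : Type} (g g' : ι → α → α) {n : ℕ} (a : Fin n → α) : Prop :=
  (∀ (k : Fin n) (τ : ι), g τ (a k) ≠ a k) ∧
  ∀ (k i₁ i₂ : Fin n) (m₁ m₂ : Bool) (τ₁ τ₂ : ι), i₁ < k → i₂ < k →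
    cond m₁ (g τ₁ (a k)) (g' τ₁ (a k)) = a i₁ →
    cond m₂ (g τ₂ (a k)) (g' τ₂ (a k)) = a i₂ →
    i₁ = i₂ ∧ m₁ = m₂ ∧ τ₁ = τ₂

/-- The indexed family of automorphisms `(g, g')` is separated on the finite set
`X`: some injective tuple listing the elements of `X` witnesses separation. -/
def AutoSepSet {ι : Type} (g g' : ι → α → α) (X : Set α) : Prop :=
  ∃ (n : ℕ) (a : Fin n → α), Function.Injective a ∧ Set.range a = X ∧ AutoSepTuple g g' a

/-- The indexed family of automorphisms `(g, g')` of `T↾(β+1)` is separated: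
it is separated on every finite subset of the level `T_β`. -/
def AutoSeparated (T : OmegaOneTree α) (β : Ordinal) {ι : Type} (g g' : ι → α → α) : Prop :=
  ∀ X : Set α, X.Finite → (∀ x ∈ X, T.height x = β) → AutoSepSet g g' X

/-!
Level `γ + 1` is the disjoint union of the fibers over the nodes of level `γ`, and each fiber is
countably infinite (the tree is infinitely splitting and its levels are countable). Extending an
automorphism `f` of `T↾(γ+1)` to `T↾(γ+2)` amounts to choosing, for every `z` of height `γ`, a
bijection from the fiber over `z` onto the fiber over `f z`; since a finite partial injection
between countably infinite sets extends to a bijection, `g_τ` can be prescribed freely (fibers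
respected) on the finite set `W = C ∪ D ∪ Y`. For `τ ∈ A` send `c_i ↦ c_j` and `d_i ↦ d_j` whenever
`f_τ b_i = b_j`, and send every other point of `W` to a fresh node outside `W`. Then the only
`g_τ`-edges inside `W` are the prescribed ones, which gives consistency and, read in both
directions, all the avoidance conditions for `g_τ` and `g_τ⁻¹`.
-/

open Set Function

theorem Set.Finite.exists_injOn_mem_diff {β : Type*} {W : Set β} (hW : W.Finite) {K : Set β}
    (hK : K.Finite) {F : β → Set β} (hF : ∀ x ∈ W, (F x).Infinite) :
    ∃ r : β → β, InjOn r W ∧ ∀ x ∈ W, r x ∈ F x \ K := by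
  classical
  induction W, hW using Set.Finite.induction_on with
  | empty => exact ⟨id, injOn_empty _, by simp⟩
  | @insert a s has hs ih =>
    obtain ⟨r, hr, hrF⟩ := ih fun x hx => hF x (mem_insert_of_mem a hx)
    obtain ⟨y, hyF, hy⟩ :=
      ((hF a (mem_insert a s)).sdiff (hK.union (hs.image r))).nonempty
    have hupd : EqOn (update r a y) r s := fun x hx =>
      update_of_ne (ne_of_mem_of_not_mem hx has) _ _
    refine ⟨update r a y, (injOn_insert has).2 ⟨hr.congr hupd.symm, ?_⟩, ?_⟩
    · rw [hupd.image_eq, update_self]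
      exact fun h => hy (Or.inr h)
    · rintro x (rfl | hx)
      · rw [update_self]; exact ⟨hyF, fun h => hy (Or.inl h)⟩
      · rw [hupd hx]; exact hrF x hx

theorem Set.exists_invOn_eqOn_of_injOn {β : Type*} {S S' W : Set β} (hS : S.Countable)
    (hSi : S.Infinite) (hS' : S'.Countable) (hS'i : S'.Infinite) (hW : W.Finite) {p : β → β}
    (hp : InjOn p (W ∩ S)) (hpS : MapsTo p (W ∩ S) S') :
    ∃ u v : β → β, MapsTo u S S' ∧ MapsTo v S' S ∧ InvOn v u S S' ∧ EqOn u p (W ∩ S) := by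
  classical
  have := hS.to_subtype; have := hSi.to_subtype
  have := hS'.to_subtype; have := hS'i.to_subtype
  have hequiv : Nonempty (S ≃ S') :=
    Cardinal.eq.1 ((Cardinal.mk_eq_aleph0 S).trans (Cardinal.mk_eq_aleph0 S').symm)
  let emb : {x : S | ↑x ∈ W} ↪ S' :=
    ⟨fun x => ⟨p x, hpS ⟨x.2, x.1.2⟩⟩, fun x y h =>
      Subtype.ext (Subtype.ext (hp ⟨x.2, x.1.2⟩ ⟨y.2, y.1.2⟩ (congrArg Subtype.val h)))⟩
  have hsmall : Cardinal.mk {x : S | ↑x ∈ W} < Cardinal.mk S :=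
    (Cardinal.lt_aleph0_iff_set_finite.2 (hW.preimage Subtype.val_injective.injOn)).trans_le
      (Cardinal.infinite_iff.1 inferInstance)
  obtain ⟨e, he⟩ := Cardinal.extend_function_of_lt emb hsmall hequiv
  refine ⟨fun x => if h : x ∈ S then e ⟨x, h⟩ else x,
    fun y => if h : y ∈ S' then e.symm ⟨y, h⟩ else y, fun x hx => ?_, fun y hy => ?_,
    ⟨fun x hx => ?_, fun y hy => ?_⟩, fun x hx => ?_⟩
  · simp [hx]
  · simp [hy]
  · simp [hx]
  · simp [hy]
  · simp only [hx.2, dite_true]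
    exact congrArg Subtype.val (he ⟨⟨x, hx.2⟩, hx.1⟩)

theorem Set.Finite.exists_injOn_extend_rel {β : Type*} {W : Set β} (hW : W.Finite)
    {R : β → β → Prop} (hRr : Relator.RightUnique R) (hRl : Relator.LeftUnique R)
    (hRW : ∀ x y, R x y → y ∈ W) {F : β → Set β} (hF : ∀ x ∈ W, (F x).Infinite)
    (hRF : ∀ x y, R x y → y ∈ F x) :
    ∃ P : β → β, InjOn P W ∧ (∀ x ∈ W, P x ∈ F x) ∧ (∀ x y, R x y → P x = y) ∧
      ∀ x ∈ W, P x ∈ W → R x (P x) := by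
  classical
  obtain ⟨r, hr, hrF⟩ := hW.exists_injOn_mem_diff hW hF
  let P x := if h : ∃ y, R x y then h.choose else r x
  have hPR : ∀ x y, R x y → R x (P x) := fun x y h => by
    have hex : ∃ y, R x y := ⟨y, h⟩
    simpa only [P, dif_pos hex] using hex.choose_spec
  have hP : ∀ x, R x (P x) ∨ P x = r x := fun x => by
    by_cases h : ∃ y, R x y
    · exact .inl (hPR x _ h.choose_spec)
    · exact .inr (by simp only [P, dif_neg h])
  have hPW : ∀ x ∈ W, P x ∈ W → R x (P x) := fun x hx hPx =>
    (hP x).resolve_right fun h => (hrF x hx).2 (h ▸ hPx)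
  refine ⟨P, fun x hx x' hx' hxx' => ?_, fun x hx => ?_, fun x y h => ?_, hPW⟩
  · rcases hP x with h | h
    · have hPx := hRW _ _ h
      exact hRl h (hxx' ▸ hPW x' hx' (hxx' ▸ hPx))
    · rcases hP x' with h' | h'
      · exact absurd (h ▸ hxx' ▸ hRW _ _ h') (hrF x hx).2
      · exact hr hx hx' (h ▸ h' ▸ hxx')
  · rcases hP x with h | h
    · exact hRF _ _ h
    · exact h ▸ (hrF x hx).1
  · exact hRr (hPR x y h) h

namespace OmegaOneTree

variable {T : OmegaOneTree α} {γ : Ordinal} {x y z : α}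

theorem height_le_add_one_iff {o : Ordinal} : o ≤ γ + 1 ↔ o ≤ γ ∨ o = γ + 1 := by
  rw [le_iff_lt_or_eq, Order.lt_add_one_iff]

theorem restrict_height (x : α) : T.restrict x (T.height x) = x :=
  T.restrict_eq le_rfl rfl

theorem restrict_lt {β : Ordinal} (h : β < T.height x) : T.restrict x β < x :=
  (T.restrict_le x h.le).lt_of_ne fun he =>
    h.ne (by rw [← T.height_restrict x h.le, he])

theorem le_restrict_of_lt (hxy : x < y) {β : Ordinal} (hx : T.height x ≤ β)
    (hβ : β ≤ T.height y) : x ≤ T.restrict y β := by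
  rcases hβ.lt_or_eq with hβ | rfl
  · have hr := T.height_restrict y hβ.le
    rcases T.pred_linear hxy (restrict_lt hβ) with h | h
    · exact h
    · refine (h.lt_or_eq.resolve_left fun h' => ?_).ge
      exact (T.height_strictMono h').not_ge (by rw [hr]; exact hx)
  · exact (restrict_height y).symm ▸ hxy.le

def fiber (T : OmegaOneTree α) (γ : Ordinal) (z : α) : Set α :=
  {x | T.height x = γ + 1 ∧ T.restrict x γ = z}

theorem mem_fiber_restrict (hx : T.height x = γ + 1) : x ∈ T.fiber γ (T.restrict x γ) :=
  ⟨hx, rfl⟩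

theorem fiber_countable (z : α) : (T.fiber γ z).Countable :=
  (T.level_countable _).mono fun _ hx => hx.1

theorem fiber_infinite (hz : T.height z = γ) : (T.fiber γ z).Infinite :=
  (T.splitting z).mono fun _ hy => ⟨hz ▸ hy.2, T.restrict_eq hy.1.le hz⟩

end OmegaOneTree

namespace IsTreeAuto

open OmegaOneTree

variable {T : OmegaOneTree α} {β : Ordinal} {g g' : α → α} {x y : α}

theorem height_eq (hg : IsTreeAuto T β g g') (hx : T.height x ≤ β) :
    T.height (g x) = T.height x :=
  hg.1 x hx

theorem left_inv (hg : IsTreeAuto T β g g') (hx : T.height x ≤ β) : g' (g x) = x :=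
  hg.2.2.1 x hx

theorem lt (hg : IsTreeAuto T β g g') (hy : T.height y ≤ β) (hxy : x < y) : g x < g y :=
  hg.2.2.2.2.1 x y hy hxy

theorem le (hg : IsTreeAuto T β g g') (hy : T.height y ≤ β) (hxy : x ≤ y) : g x ≤ g y :=
  hxy.lt_or_eq.elim (fun h => (hg.lt hy h).le) fun h => h ▸ le_rfl

theorem symm (hg : IsTreeAuto T β g g') : IsTreeAuto T β g' g :=
  ⟨hg.2.1, hg.1, hg.2.2.2.1, hg.2.2.1, hg.2.2.2.2.2, hg.2.2.2.2.1⟩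

theorem right_inv (hg : IsTreeAuto T β g g') (hx : T.height x ≤ β) : g (g' x) = x :=
  hg.symm.left_inv hx

theorem injOn (hg : IsTreeAuto T β g g') : InjOn g {x | T.height x ≤ β} :=
  fun x hx y hy h => by rw [← hg.left_inv hx, h, hg.left_inv hy]

theorem map_restrict (hg : IsTreeAuto T β g g') (hx : T.height x ≤ β) {δ : Ordinal}
    (hδ : δ ≤ T.height x) : g (T.restrict x δ) = T.restrict (g x) δ := by
  have hr := T.height_restrict x hδ
  rcases (T.restrict_le x hδ).lt_or_eq with h | h
  · refine (T.restrict_eq (hg.lt hx h).le ?_).symm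
    rw [hg.height_eq (by rw [hr]; exact hδ.trans hx), hr]
  · rw [h, ← hr, h, ← hg.height_eq hx, restrict_height]

end IsTreeAuto

namespace OmegaOneTree

variable {T : OmegaOneTree α} {γ : Ordinal} {f f' G G' : α → α} {x y : α}

theorem height_restrict_of_eq_add_one (hx : T.height x = γ + 1) :
    T.height (T.restrict x γ) = γ :=
  T.height_restrict x (hx ▸ Order.le_succ γ)

def glue (T : OmegaOneTree α) (γ : Ordinal) (f G : α → α) (x : α) : α :=
  if T.height x ≤ γ then f x else G x

theorem glue_of_le (hx : T.height x ≤ γ) : T.glue γ f G x = f x :=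
  if_pos hx

theorem glue_of_eq_add_one (hx : T.height x = γ + 1) : T.glue γ f G x = G x :=
  if_neg (hx ▸ (Order.lt_add_one_iff.2 le_rfl).not_ge)

theorem height_glue (hf : IsTreeAuto T γ f f')
    (hG : ∀ x, T.height x = γ + 1 → G x ∈ T.fiber γ (f (T.restrict x γ)))
    (hx : T.height x ≤ γ + 1) : T.height (T.glue γ f G x) = T.height x := by
  rcases height_le_add_one_iff.1 hx with h | h
  · rw [glue_of_le h, hf.height_eq h]
  · rw [glue_of_eq_add_one h, (hG x h).1, h]

theorem glue_lt_glue (hf : IsTreeAuto T γ f f')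
    (hG : ∀ x, T.height x = γ + 1 → G x ∈ T.fiber γ (f (T.restrict x γ)))
    (hy : T.height y ≤ γ + 1) (hxy : x < y) :
    T.glue γ f G x < T.glue γ f G y := by
  rcases height_le_add_one_iff.1 hy with h | h
  · have hx := (T.height_strictMono hxy).le.trans h
    rw [glue_of_le h, glue_of_le hx]
    exact hf.lt h hxy
  · have hx : T.height x ≤ γ := Order.lt_add_one_iff.1 (h ▸ T.height_strictMono hxy)
    rw [glue_of_le hx, glue_of_eq_add_one h]
    calc f x ≤ f (T.restrict y γ) :=
          hf.le (height_restrict_of_eq_add_one h).le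
            (le_restrict_of_lt hxy hx (h ▸ Order.le_succ γ))
      _ = T.restrict (G y) γ := (hG y h).2.symm
      _ < G y := restrict_lt (by rw [(hG y h).1]; exact Order.lt_add_one_iff.2 le_rfl)

theorem glue_left_inv (hf : IsTreeAuto T γ f f')
    (hG : ∀ x, T.height x = γ + 1 → G x ∈ T.fiber γ (f (T.restrict x γ)))
    (hG'G : ∀ x, T.height x = γ + 1 → G' (G x) = x)
    (hx : T.height x ≤ γ + 1) : T.glue γ f' G' (T.glue γ f G x) = x := by
  rcases height_le_add_one_iff.1 hx with h | h
  · rw [glue_of_le h, glue_of_le (by rw [hf.height_eq h]; exact h), hf.left_inv h]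
  · rw [glue_of_eq_add_one h, glue_of_eq_add_one (hG x h).1, hG'G x h]

theorem isTreeAuto_glue (hf : IsTreeAuto T γ f f')
    (hG : ∀ x, T.height x = γ + 1 → G x ∈ T.fiber γ (f (T.restrict x γ)))
    (hG' : ∀ x, T.height x = γ + 1 → G' x ∈ T.fiber γ (f' (T.restrict x γ)))
    (hG'G : ∀ x, T.height x = γ + 1 → G' (G x) = x)
    (hGG' : ∀ x, T.height x = γ + 1 → G (G' x) = x) :
    IsTreeAuto T (γ + 1) (T.glue γ f G) (T.glue γ f' G') :=
  ⟨fun _ => height_glue hf hG, fun _ => height_glue hf.symm hG',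
    fun _ => glue_left_inv hf hG hG'G, fun _ => glue_left_inv hf.symm hG' hGG',
    fun _ _ => glue_lt_glue hf hG, fun _ _ => glue_lt_glue hf.symm hG'⟩

theorem exists_fiberwise_bijection (hf : IsTreeAuto T γ f f') {W : Set α} (hW : W.Finite)
    (hWlev : ∀ x ∈ W, T.height x = γ + 1) {P : α → α} (hP : InjOn P W)
    (hPW : ∀ x ∈ W, P x ∈ T.fiber γ (f (T.restrict x γ))) :
    ∃ G G' : α → α, (∀ x, T.height x = γ + 1 → G x ∈ T.fiber γ (f (T.restrict x γ))) ∧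
      (∀ x, T.height x = γ + 1 → G' x ∈ T.fiber γ (f' (T.restrict x γ))) ∧
      (∀ x, T.height x = γ + 1 → G' (G x) = x) ∧ (∀ x, T.height x = γ + 1 → G (G' x) = x) ∧
      EqOn G P W := by
  have hfib : ∀ z, ∃ u v : α → α, T.height z = γ →
      MapsTo u (T.fiber γ z) (T.fiber γ (f z)) ∧ MapsTo v (T.fiber γ (f z)) (T.fiber γ z) ∧
      InvOn v u (T.fiber γ z) (T.fiber γ (f z)) ∧ EqOn u P (W ∩ T.fiber γ z) := fun z => by
    by_cases hz : T.height z = γ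
    · obtain ⟨u, v, h⟩ := exists_invOn_eqOn_of_injOn (fiber_countable z) (fiber_infinite hz)
        (fiber_countable _) (fiber_infinite ((hf.height_eq hz.le).trans hz)) hW
        (hP.mono inter_subset_left) fun x hx => hx.2.2 ▸ hPW x hx.1
      exact ⟨u, v, fun _ => h⟩
    · exact ⟨id, id, fun h => absurd h hz⟩
  choose u v huv using hfib
  have hπ : ∀ {x}, T.height x = γ + 1 → T.height (T.restrict x γ) = γ :=
    height_restrict_of_eq_add_one
  have hf'π : ∀ x, T.height x = γ + 1 → T.height (f' (T.restrict x γ)) = γ := fun x hx =>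
    (hf.symm.height_eq (hπ hx).le).trans (hπ hx)
  have hff'π : ∀ x, T.height x = γ + 1 → f (f' (T.restrict x γ)) = T.restrict x γ :=
    fun x hx => hf.right_inv (hπ hx).le
  have hG : ∀ x, T.height x = γ + 1 → u (T.restrict x γ) x ∈ T.fiber γ (f (T.restrict x γ)) :=
    fun x hx => (huv _ (hπ hx)).1 (mem_fiber_restrict hx)
  have hG' : ∀ x, T.height x = γ + 1 →
      v (f' (T.restrict x γ)) x ∈ T.fiber γ (f' (T.restrict x γ)) := fun x hx =>
    (huv _ (hf'π x hx)).2.1 (by rw [hff'π x hx]; exact mem_fiber_restrict hx)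
  refine ⟨fun x => u (T.restrict x γ) x, fun x => v (f' (T.restrict x γ)) x, hG, hG',
    fun x hx => ?_, fun x hx => ?_, fun x hx => (huv _ (hπ (hWlev x hx))).2.2.2
      ⟨hx, mem_fiber_restrict (hWlev x hx)⟩⟩
  · simp only [(hG x hx).2, hf.left_inv (hπ hx).le]
    exact (huv _ (hπ hx)).2.2.1.1 (mem_fiber_restrict hx)
  · simp only [(hG' x hx).2]
    exact (huv _ (hf'π x hx)).2.2.1.2 (by rw [hff'π x hx]; exact mem_fiber_restrict hx)

theorem exists_extension_eqOn (hf : IsTreeAuto T γ f f') {W : Set α} (hW : W.Finite)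
    (hWlev : ∀ x ∈ W, T.height x = γ + 1) {P : α → α} (hP : InjOn P W)
    (hPW : ∀ x ∈ W, P x ∈ T.fiber γ (f (T.restrict x γ))) :
    ∃ g g' : α → α, IsTreeAuto T (γ + 1) g g' ∧ AutoExtends T γ f f' g g' ∧ EqOn g P W := by
  obtain ⟨G, G', hG, hG', hG'G, hGG', hGP⟩ := exists_fiberwise_bijection hf hW hWlev hP hPW
  exact ⟨T.glue γ f G, T.glue γ f' G', isTreeAuto_glue hf hG hG' hG'G hGG',
    ⟨fun _ => glue_of_le, fun _ => glue_of_le⟩,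
    fun x hx => (glue_of_eq_add_one (hWlev x hx)).trans (hGP hx)⟩

theorem exists_extension_rel (hf : IsTreeAuto T γ f f') {W : Set α} (hW : W.Finite)
    (hWlev : ∀ x ∈ W, T.height x = γ + 1) {R : α → α → Prop} (hRr : Relator.RightUnique R)
    (hRl : Relator.LeftUnique R) (hRW : ∀ x y, R x y → x ∈ W ∧ y ∈ W)
    (hRfib : ∀ x y, R x y → y ∈ T.fiber γ (f (T.restrict x γ))) :
    ∃ g g' : α → α, IsTreeAuto T (γ + 1) g g' ∧ AutoExtends T γ f f' g g' ∧
      (∀ x y, R x y → g x = y) ∧ (∀ x ∈ W, ∀ y ∈ W, g x = y → R x y) ∧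
      (∀ x ∈ W, ∀ y ∈ W, g' x = y → R y x) := by
  have hπ x (hx : x ∈ W) := height_restrict_of_eq_add_one (hWlev x hx)
  obtain ⟨P, hP, hPfib, hRP, hPW⟩ := hW.exists_injOn_extend_rel hRr hRl
    (fun x y h => (hRW x y h).2)
    (fun x hx => fiber_infinite ((hf.height_eq (hπ x hx).le).trans (hπ x hx))) hRfib
  obtain ⟨g, g', hg, hext, hgP⟩ := exists_extension_eqOn hf hW hWlev hP hPfib
  have hgR : ∀ x ∈ W, ∀ y ∈ W, g x = y → R x y := fun x hx y hy hxy => by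
    rw [hgP hx] at hxy
    exact hxy ▸ hPW x hx (hxy ▸ hy)
  refine ⟨g, g', hg, hext, fun x y h => (hgP (hRW x y h).1).trans (hRP x y h), hgR,
    fun x hx y hy hxy => hgR y hy x hx ?_⟩
  rw [← hxy, hg.right_inv (hWlev x hx).le]

end OmegaOneTree

def TupleLift {β : Type*} {n : ℕ} (g : β → β) (b c d : Fin n → β) (x y : β) : Prop :=
  ∃ i j, g (b i) = b j ∧ (x = c i ∧ y = c j ∨ x = d i ∧ y = d j)

namespace TupleLift

variable {β : Type*} {n : ℕ} {g : β → β} {b c d : Fin n → β} {x y : β}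

theorem rightUnique (hb : Injective b)
    (hcd : Injective (Sum.elim c d)) : Relator.RightUnique (TupleLift g b c d) := by
  obtain ⟨hc, hd, hcd⟩ := Sum.elim_injective.1 hcd
  rintro x y y' ⟨i, j, hij, ⟨rfl, rfl⟩ | ⟨rfl, rfl⟩⟩ ⟨i', j', hij', ⟨hx, rfl⟩ | ⟨hx, rfl⟩⟩
  · obtain rfl := hc hx
    rw [hb (hij.symm.trans hij')]
  · exact absurd hx (hcd i i')
  · exact absurd hx.symm (hcd i' i)
  · obtain rfl := hd hx
    rw [hb (hij.symm.trans hij')]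

theorem leftUnique (hb : Injective b) (hg : InjOn g (range b))
    (hcd : Injective (Sum.elim c d)) : Relator.LeftUnique (TupleLift g b c d) := by
  obtain ⟨hc, hd, hcd⟩ := Sum.elim_injective.1 hcd
  have hgb : ∀ {i i' j}, g (b i) = b j → g (b i') = b j → i = i' := fun h h' =>
    hb (hg (mem_range_self _) (mem_range_self _) (h.trans h'.symm))
  rintro x x' y ⟨i, j, hij, ⟨rfl, rfl⟩ | ⟨rfl, rfl⟩⟩ ⟨i', j', hij', ⟨rfl, hy⟩ | ⟨rfl, hy⟩⟩
  · obtain rfl := hc hy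
    rw [hgb hij hij']
  · exact absurd hy (hcd j j')
  · exact absurd hy.symm (hcd j' j)
  · obtain rfl := hd hy
    rw [hgb hij hij']

theorem mem_range (h : TupleLift g b c d x y) :
    x ∈ range c ∧ y ∈ range c ∨ x ∈ range d ∧ y ∈ range d := by
  obtain ⟨i, j, -, ⟨rfl, rfl⟩ | ⟨rfl, rfl⟩⟩ := h
  exacts [.inl ⟨⟨i, rfl⟩, ⟨j, rfl⟩⟩, .inr ⟨⟨i, rfl⟩, ⟨j, rfl⟩⟩]

end TupleLift

theorem OmegaOneTree.mem_fiber_of_tupleLift {T : OmegaOneTree α} {γ : Ordinal} {n : ℕ}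
    {g : α → α} {b c d : Fin n → α} {x y : α} (hblev : ∀ k, T.height (b k) = γ)
    (hbc : ∀ k, b k < c k) (hbd : ∀ k, b k < d k) (hclev : ∀ k, T.height (c k) = γ + 1)
    (hdlev : ∀ k, T.height (d k) = γ + 1) (h : TupleLift g b c d x y) :
    y ∈ T.fiber γ (g (T.restrict x γ)) := by
  have hrc k : T.restrict (c k) γ = b k := T.restrict_eq (hbc k).le (hblev k)
  have hrd k : T.restrict (d k) γ = b k := T.restrict_eq (hbd k).le (hblev k)
  obtain ⟨i, j, hij, ⟨rfl, rfl⟩ | ⟨rfl, rfl⟩⟩ := h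
  · exact ⟨hclev j, by rw [hrc, hrc, hij]⟩
  · exact ⟨hdlev j, by rw [hrd, hrd, hij]⟩

theorem Set.notMem_of_linked {β : Type*} {C D Y : Set β} {p : Prop} {x y : β}
    (hCD : Disjoint C D) (hY : Disjoint (C ∪ D) Y)
    (h : y ∈ C ∪ D ∪ Y → p ∧ (x ∈ C ∧ y ∈ C ∨ x ∈ D ∧ y ∈ D)) :
    (x ∈ C → (p → y ∉ Y ∪ D) ∧ (¬p → y ∉ C ∪ D ∪ Y)) ∧
    (x ∈ D → (p → y ∉ Y ∪ C) ∧ (¬p → y ∉ C ∪ D ∪ Y)) ∧ (x ∈ Y → y ∉ C ∪ D ∪ Y) := by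
  have := hCD.notMem_of_mem_left (a := x); have := hCD.notMem_of_mem_left (a := y)
  have := hY.notMem_of_mem_left (a := x); have := hY.notMem_of_mem_left (a := y)
  simp only [mem_union] at *
  tauto

theorem autoConsistentPair_of_forall_imp {T : OmegaOneTree α} {γ : Ordinal} {g g' : α → α}
    {n : ℕ} {b c : Fin n → α} (hg : IsTreeAuto T (γ + 1) g g') (hblev : ∀ k, T.height (b k) = γ)
    (hbc : ∀ k, b k < c k) (hclev : ∀ k, T.height (c k) = γ + 1)
    (h : ∀ i j, g (b i) = b j → g (c i) = c j) : AutoConsistentPair g b c := by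
  have hrc k : T.restrict (c k) γ = b k := T.restrict_eq (hbc k).le (hblev k)
  refine fun i j => ⟨h i j, fun hij => ?_⟩
  rw [← hrc i, hg.map_restrict (hclev i).le (by rw [hclev]; exact Order.le_succ γ), hij, hrc]

theorem OmegaOneTree.exists_extension_two_tuples {T : OmegaOneTree α} {γ : Ordinal}
    {f f' : α → α} (hf : IsTreeAuto T γ f f') (p : Prop) {n : ℕ} {b c d : Fin n → α}
    (hbinj : Injective b) (hblev : ∀ k, T.height (b k) = γ)
    (hcdinj : Injective (Sum.elim c d)) (hclev : ∀ k, T.height (c k) = γ + 1)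
    (hdlev : ∀ k, T.height (d k) = γ + 1) (hbc : ∀ k, b k < c k) (hbd : ∀ k, b k < d k)
    {Y : Set α} (hYfin : Y.Finite) (hYlev : ∀ x ∈ Y, T.height x = γ + 1) :
    ∃ g g' : α → α, IsTreeAuto T (γ + 1) g g' ∧ AutoExtends T γ f f' g g' ∧
      (p → AutoConsistentPair g b c ∧ AutoConsistentPair g b d) ∧
      ∀ x ∈ range c ∪ range d ∪ Y, ∀ y ∈ range c ∪ range d ∪ Y, g x = y ∨ g' x = y →
        p ∧ (x ∈ range c ∧ y ∈ range c ∨ x ∈ range d ∧ y ∈ range d) := by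
  have hWlev : ∀ x ∈ range c ∪ range d ∪ Y, T.height x = γ + 1 := by
    rintro x ((⟨i, rfl⟩ | ⟨i, rfl⟩) | hx)
    exacts [hclev i, hdlev i, hYlev x hx]
  have hbγ : range b ⊆ {x | T.height x ≤ γ} := range_subset_iff.2 fun k => (hblev k).le
  obtain ⟨g, g', hg, hext, hRg, hgR, hg'R⟩ := exists_extension_rel hf
    (((finite_range c).union (finite_range d)).union hYfin) hWlev
    (R := fun x y => p ∧ TupleLift f b c d x y)
    (fun _ _ _ h h' => TupleLift.rightUnique hbinj hcdinj h.2 h'.2)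
    (fun _ _ _ h h' => TupleLift.leftUnique hbinj (hf.injOn.mono hbγ) hcdinj h.2 h'.2)
    (fun _ _ h => (TupleLift.mem_range h.2).elim (fun h => ⟨.inl (.inl h.1), .inl (.inl h.2)⟩)
      fun h => ⟨.inl (.inr h.1), .inl (.inr h.2)⟩)
    fun _ _ h => mem_fiber_of_tupleLift hblev hbc hbd hclev hdlev h.2
  have hgb i : g (b i) = f (b i) := hext.1 _ (hblev i).le
  refine ⟨g, g', hg, hext, fun hp => ⟨?_, ?_⟩, fun x hx y hy hxy => ?_⟩
  · exact autoConsistentPair_of_forall_imp hg hblev hbc hclev fun i j hij =>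
      hRg _ _ ⟨hp, i, j, (hgb i).symm.trans hij, .inl ⟨rfl, rfl⟩⟩
  · exact autoConsistentPair_of_forall_imp hg hblev hbd hdlev fun i j hij =>
      hRg _ _ ⟨hp, i, j, (hgb i).symm.trans hij, .inr ⟨rfl, rfl⟩⟩
  · rcases hxy with h | h
    · exact (hgR x hx y hy h).imp_right TupleLift.mem_range
    · exact (hg'R x hx y hy h).imp_right fun h' => (TupleLift.mem_range h').imp And.symm And.symm

theorem auto_family_extension_two_tuples_general
    (T : OmegaOneTree α) (γ : Ordinal)
    {ι : Type} (f f' : ι → α → α)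
    (hf : ∀ τ, IsTreeAuto T γ (f τ) (f' τ))
    (A B : Set ι)
    (n : ℕ) (b c d : Fin n → α)
    (hbinj : Function.Injective b) (hblev : ∀ k, T.height (b k) = γ)
    (hcdinj : Function.Injective (Sum.elim c d : Fin n ⊕ Fin n → α))
    (hclev : ∀ k, T.height (c k) = γ + 1) (hdlev : ∀ k, T.height (d k) = γ + 1)
    (hbc : ∀ k, b k < c k) (hbd : ∀ k, b k < d k)
    (Y : Set α) (hYfin : Y.Finite) (hYlev : ∀ x ∈ Y, T.height x = γ + 1)
    (hYdisj : (Set.range c ∪ Set.range d) ∩ Y = ∅) :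
    ∃ g g' : ι → α → α,
      (∀ τ, IsTreeAuto T (γ + 1) (g τ) (g' τ)) ∧
      (∀ τ, AutoExtends T γ (f τ) (f' τ) (g τ) (g' τ)) ∧
      (∀ τ ∈ A, AutoConsistentPair (g τ) b c ∧ AutoConsistentPair (g τ) b d) ∧
      (∀ x ∈ Set.range c,
        (∀ τ ∈ A, g τ x ∉ Y ∪ Set.range d ∧ g' τ x ∉ Y ∪ Set.range d) ∧
        (∀ τ ∈ B, τ ∉ A →
          g τ x ∉ Set.range c ∪ Set.range d ∪ Y ∧
          g' τ x ∉ Set.range c ∪ Set.range d ∪ Y)) ∧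
      (∀ x ∈ Set.range d,
        (∀ τ ∈ A, g τ x ∉ Y ∪ Set.range c ∧ g' τ x ∉ Y ∪ Set.range c) ∧
        (∀ τ ∈ B, τ ∉ A →
          g τ x ∉ Set.range c ∪ Set.range d ∪ Y ∧
          g' τ x ∉ Set.range c ∪ Set.range d ∪ Y)) ∧
      (∀ x ∈ Y, ∀ τ ∈ B,
        g τ x ∉ Set.range c ∪ Set.range d ∪ Y ∧
        g' τ x ∉ Set.range c ∪ Set.range d ∪ Y) := by
  choose g g' hg hext hcons hlink using fun τ => OmegaOneTree.exists_extension_two_tuples (hf τ)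
    (τ ∈ A) hbinj hblev hcdinj hclev hdlev hbc hbd hYfin hYlev
  have key τ x hx y (hxy : g τ x = y ∨ g' τ x = y) :=
    notMem_of_linked (disjoint_range_iff.2 (Sum.elim_injective.1 hcdinj).2.2)
      (disjoint_iff_inter_eq_empty.2 hYdisj) fun hy => hlink τ x hx y hy hxy
  refine ⟨g, g', hg, hext, hcons, fun x hx => ?_, fun x hx => ?_, fun x hx τ _ => ?_⟩
  · have k τ := key τ x (.inl (.inl hx))
    exact ⟨fun τ hτ => ⟨((k τ _ (.inl rfl)).1 hx).1 hτ, ((k τ _ (.inr rfl)).1 hx).1 hτ⟩,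
      fun τ _ hτ => ⟨((k τ _ (.inl rfl)).1 hx).2 hτ, ((k τ _ (.inr rfl)).1 hx).2 hτ⟩⟩
  · have k τ := key τ x (.inl (.inr hx))
    exact ⟨fun τ hτ => ⟨((k τ _ (.inl rfl)).2.1 hx).1 hτ, ((k τ _ (.inr rfl)).2.1 hx).1 hτ⟩,
      fun τ _ hτ => ⟨((k τ _ (.inl rfl)).2.1 hx).2 hτ, ((k τ _ (.inr rfl)).2.1 hx).2 hτ⟩⟩
  · exact ⟨(key τ x (.inr hx) _ (.inl rfl)).2.2 hx, (key τ x (.inr hx) _ (.inr rfl)).2.2 hx⟩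

/-- Lemma 5.40: one-step extension of a countable family of automorphisms which is
consistent with two tuples `c`, `d` above `b` for indices in `A`, and which moves
elements of `C = range c`, `D = range d`, and `Y` suitably out of the other sets. -/
theorem auto_family_extension_two_tuples
    (T : OmegaOneTree α) (γ : Ordinal) (hγ : γ < omega1)
    {ι : Type} [Countable ι] (f f' : ι → α → α)
    (hf : ∀ τ, IsTreeAuto T γ (f τ) (f' τ))
    (A B : Set ι) (hAB : A ⊆ B) (hAfin : A.Finite) (hBfin : B.Finite)
    (n : ℕ) (b c d : Fin n → α)
    (hbinj : Function.Injective b) (hblev : ∀ k, T.height (b k) = γ)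
    (hcdinj : Function.Injective (Sum.elim c d : Fin n ⊕ Fin n → α))
    (hclev : ∀ k, T.height (c k) = γ + 1) (hdlev : ∀ k, T.height (d k) = γ + 1)
    (hbc : ∀ k, b k < c k) (hbd : ∀ k, b k < d k)
    (Y : Set α) (hYfin : Y.Finite) (hYlev : ∀ x ∈ Y, T.height x = γ + 1)
    (hYdisj : (Set.range c ∪ Set.range d) ∩ Y = ∅) :
    ∃ g g' : ι → α → α,
      (∀ τ, IsTreeAuto T (γ + 1) (g τ) (g' τ)) ∧
      (∀ τ, AutoExtends T γ (f τ) (f' τ) (g τ) (g' τ)) ∧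
      (∀ τ ∈ A, AutoConsistentPair (g τ) b c ∧ AutoConsistentPair (g τ) b d) ∧
      (∀ x ∈ Set.range c,
        (∀ τ ∈ A, g τ x ∉ Y ∪ Set.range d ∧ g' τ x ∉ Y ∪ Set.range d) ∧
        (∀ τ ∈ B, τ ∉ A →
          g τ x ∉ Set.range c ∪ Set.range d ∪ Y ∧
          g' τ x ∉ Set.range c ∪ Set.range d ∪ Y)) ∧
      (∀ x ∈ Set.range d,
        (∀ τ ∈ A, g τ x ∉ Y ∪ Set.range c ∧ g' τ x ∉ Y ∪ Set.range c) ∧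
        (∀ τ ∈ B, τ ∉ A →
          g τ x ∉ Set.range c ∪ Set.range d ∪ Y ∧
          g' τ x ∉ Set.range c ∪ Set.range d ∪ Y)) ∧
      (∀ x ∈ Y, ∀ τ ∈ B,
        g τ x ∉ Set.range c ∪ Set.range d ∪ Y ∧
        g' τ x ∉ Set.range c ∪ Set.range d ∪ Y) :=
  auto_family_extension_two_tuples_general T γ f f' hf A B n b c d hbinj hblev hcdinj hclev hdlev
    hbc hbd Y hYfin hYlev hYdisj
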